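/- (Theorem 3.2) Let f : {-1,1}^N → ℝ with E_{x~B_p}[f(x)²] > 0, let ρ ∈ [0,1), and let h̄(ρ) = h(ρ) / E_{x~B_p}[f(x)²] be the normalized noise stability. Then the normalized residual of the best linear approximation satisfies (Σ_{S⊆{1,…,N}, |S|≥2} f̂(S)²) / (Σ_{S⊆{1,…,N}} f̂(S)²) ≤ (1 - h̄(ρ)) / (1 - ρ²). -/

import Mathlib

/-!
Under `B_{p,ρ}` the coordinate pairs are independent, and for one coordinate the normalized
character `φ(b) = (b - μ)/σ` satisfies `E[φ(x_i)] = E[φ(x'_i)] = 0` and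
`E[φ(x_i) φ(x'_i)] = ρ`.
Expanding `f = ∑_S f̂(S) φ_S` (Fourier inversion, from the one-coordinate completeness relation
`w(b) (φ(b) φ(c) + 1) = [b = c]`) therefore gives `h(ρ) = ∑_S ρ^|S| f̂(S)²`. At `ρ = 1` the
coupling is the diagonal, so this specializes to Parseval, `∑_S f̂(S)² = E[f²]`. Hence
`E[f²] - h(ρ) = ∑_S (1 - ρ^|S|) f̂(S)² ≥ (1 - ρ²) ∑_{|S| ≥ 2} f̂(S)²`.
-/

open Finset

namespace Paper

noncomputable section

/-- Map a Boolean coordinate to its ±1 value. -/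
def sgn (b : Bool) : ℝ := if b then 1 else -1

/-- σ = 2√(p(1-p)). -/
def sigma (p : ℝ) : ℝ := 2 * Real.sqrt (p * (1 - p))

/-- Probability of a point x under the p-biased distribution B_p. -/
def wt (N : ℕ) (p : ℝ) (x : Fin N → Bool) : ℝ :=
  ∏ i, (if x i then p else 1 - p)

/-- Expectation under the p-biased distribution B_p (finite weighted sum). -/
def expect (N : ℕ) (p : ℝ) (g : (Fin N → Bool) → ℝ) : ℝ :=
  ∑ x : Fin N → Bool, wt N p x * g x

/-- The basis function φ_S(x) = ∏_{i∈S} (x_i - μ)/σ with μ = 2p-1. -/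
def phi (N : ℕ) (p : ℝ) (S : Finset (Fin N)) (x : Fin N → Bool) : ℝ :=
  ∏ i ∈ S, (sgn (x i) - (2 * p - 1)) / sigma p

/-- Fourier coefficient f̂(S) = E_{x~B_p}[f(x) φ_S(x)]. -/
def coeff (N : ℕ) (p : ℝ) (f : (Fin N → Bool) → ℝ) (S : Finset (Fin N)) : ℝ :=
  expect N p (fun x => f x * phi N p S x)

/-- Individual influence Inf_i(f) = E_{x~B_p}[f(x|_{i→1}) - f(x|_{i→-1})]. -/
def infl (N : ℕ) (p : ℝ) (f : (Fin N → Bool) → ℝ) (i : Fin N) : ℝ :=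
  expect N p (fun x => f (Function.update x i true) - f (Function.update x i false))

/-- x|_{I→-1}: set all coordinates in I to -1. -/
def setNeg (N : ℕ) (I : Finset (Fin N)) (x : Fin N → Bool) : Fin N → Bool :=
  fun j => if j ∈ I then false else x j

/-- Group influence Inf_I(f) = E_{x~B_p}[f(x) - f(x|_{I→-1})]. -/
def inflSet (N : ℕ) (p : ℝ) (f : (Fin N → Bool) → ℝ) (I : Finset (Fin N)) : ℝ :=
  expect N p (fun x => f x - f (setNeg N I x))

/-- Least-squares objective R(θ) for the linear datamodel (x̄_i = (1+x_i)/2 ∈ {0,1}). -/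
def Rres (N : ℕ) (p : ℝ) (f : (Fin N → Bool) → ℝ) (θ : Fin (N + 1) → ℝ) : ℝ :=
  expect N p
    (fun x => (f x - θ 0 - ∑ i : Fin N, θ i.succ * (if x i then (1 : ℝ) else 0)) ^ 2)

/-- Joint probability of a single coordinate pair (x_i, x'_i) under the ρ-correlated
distribution. -/
def pairWt (p ρ : ℝ) (b b' : Bool) : ℝ :=
  if b then (if b' then p * (1 - (1 - ρ) * (1 - p)) else p * ((1 - ρ) * (1 - p)))
  else (if b' then (1 - p) * ((1 - ρ) * p) else (1 - p) * (1 - (1 - ρ) * p))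

/-- Probability of the pair (x, x') under the ρ-correlated distribution B_{p,ρ}. -/
def wtPair (N : ℕ) (p ρ : ℝ) (x x' : Fin N → Bool) : ℝ :=
  ∏ i, pairWt p ρ (x i) (x' i)

/-- Noise stability h(ρ) = E_{(x,x')~B_{p,ρ}}[f(x) f(x')]. -/
def noiseStab (N : ℕ) (p ρ : ℝ) (f : (Fin N → Bool) → ℝ) : ℝ :=
  ∑ x : Fin N → Bool, ∑ x' : Fin N → Bool, wtPair N p ρ x x' * (f x * f x')

def coordWt (p : ℝ) (b : Bool) : ℝ := if b then p else 1 - p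

def coordPhi (p : ℝ) (b : Bool) : ℝ := (sgn b - (2 * p - 1)) / sigma p

section OneCoordinate

variable {p : ℝ}

lemma sigma_pos (hp : 0 < p) (hp1 : p < 1) : 0 < sigma p := by
  have := Real.sqrt_pos.2 (mul_pos hp (sub_pos.2 hp1))
  unfold sigma
  positivity

lemma sigma_sq (hp : 0 ≤ p) (hp1 : p ≤ 1) : sigma p ^ 2 = 4 * (p * (1 - p)) := by
  rw [sigma, mul_pow, Real.sq_sqrt (mul_nonneg hp (sub_nonneg.2 hp1))]
  norm_num

lemma coordWt_mul_coordPhi_mul_coordPhi_add_one (hp : 0 < p) (hp1 : p < 1) (b c : Bool) :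
    coordWt p b * (coordPhi p b * coordPhi p c + 1) = if b = c then 1 else 0 := by
  have hσ := (sigma_pos hp hp1).ne'
  have hσ2 := sigma_sq hp.le hp1.le
  cases b <;> cases c <;>
    simp only [coordWt, coordPhi, sgn, Bool.false_eq_true, Bool.true_eq_false,
      ↓reduceIte] <;>
    field_simp <;> (try rw [hσ2]) <;> ring

lemma sum_pairWt_mul_ite (hp : 0 < p) (hp1 : p < 1) (ρ : ℝ) (s t : Prop) [Decidable s]
    [Decidable t] :
    ∑ b, ∑ b', pairWt p ρ b b' *
        ((if s then coordPhi p b else 1) * (if t then coordPhi p b' else 1))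
      = if s ↔ t then (if s then ρ else 1) else 0 := by
  have hσ := (sigma_pos hp hp1).ne'
  have hσ2 := sigma_sq hp.le hp1.le
  by_cases hs : s <;> by_cases ht : t <;>
    simp only [hs, ht, Fintype.sum_bool, pairWt, coordPhi, sgn, Bool.false_eq_true, ↓reduceIte,
      iff_self, iff_false, false_iff, not_true_eq_false, mul_one] <;>
    field_simp <;> (try rw [hσ2]) <;> ring

lemma pairWt_one (b b' : Bool) : pairWt p 1 b b' = if b = b' then coordWt p b else 0 := by
  cases b <;> cases b' <;> simp [pairWt, coordWt]

end OneCoordinate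

section Fourier

variable {N : ℕ} {p : ℝ}

lemma phi_eq_prod_ite (S : Finset (Fin N)) (x : Fin N → Bool) :
    phi N p S x = ∏ i, if i ∈ S then coordPhi p (x i) else 1 := by
  rw [prod_ite_mem, univ_inter]
  rfl

lemma sum_sum_prod_apply {ι β : Type*} [Fintype ι] [DecidableEq ι] [Fintype β]
    (g : ι → β → β → ℝ) :
    ∑ x : ι → β, ∑ x' : ι → β, ∏ i, g i (x i) (x' i) = ∏ i, ∑ b, ∑ b', g i b b' := by
  simp only [Fintype.prod_sum]

lemma wt_mul_sum_phi_mul_phi (hp : 0 < p) (hp1 : p < 1) (x y : Fin N → Bool) :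
    wt N p x * ∑ S, phi N p S x * phi N p S y = if x = y then 1 else 0 := by
  have hprod : ∑ S, phi N p S x * phi N p S y
      = ∏ i, (coordPhi p (x i) * coordPhi p (y i) + 1) := by
    simp only [add_comm _ (1 : ℝ), prod_one_add, powerset_univ, phi, ← prod_mul_distrib]
    rfl
  calc wt N p x * ∑ S, phi N p S x * phi N p S y
      = ∏ i, coordWt p (x i) * (coordPhi p (x i) * coordPhi p (y i) + 1) := by
        rw [hprod, wt, ← prod_mul_distrib]
        rfl
    _ = if x = y then 1 else 0 := by
        simp only [coordWt_mul_coordPhi_mul_coordPhi_add_one hp hp1, Fintype.prod_boole,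
          ← funext_iff]

theorem sum_coeff_mul_phi (hp : 0 < p) (hp1 : p < 1) (f : (Fin N → Bool) → ℝ)
    (y : Fin N → Bool) : ∑ S, coeff N p f S * phi N p S y = f y := by
  calc ∑ S, coeff N p f S * phi N p S y
      = ∑ x, f x * (wt N p x * ∑ S, phi N p S x * phi N p S y) := by
        simp only [coeff, expect, sum_mul, mul_sum]
        rw [sum_comm]
        exact sum_congr rfl fun x _ => sum_congr rfl fun S _ => by ring
    _ = f y := by simp [wt_mul_sum_phi_mul_phi hp hp1]

lemma sum_wtPair_mul_phi_mul_phi (hp : 0 < p) (hp1 : p < 1) (ρ : ℝ) (S T : Finset (Fin N)) :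
    ∑ x, ∑ x', wtPair N p ρ x x' * (phi N p S x * phi N p T x')
      = if S = T then ρ ^ S.card else 0 := by
  simp only [phi_eq_prod_ite, wtPair, ← prod_mul_distrib]
  rw [sum_sum_prod_apply (fun i b b' => pairWt p ρ b b' *
    ((if i ∈ S then coordPhi p b else 1) * (if i ∈ T then coordPhi p b' else 1)))]
  simp only [sum_pairWt_mul_ite hp hp1, prod_ite_zero, mem_univ, true_implies,
    ← Finset.ext_iff]
  rw [prod_ite_mem, univ_inter, prod_const]

theorem noiseStab_eq_sum_pow_card_mul_coeff_sq (hp : 0 < p) (hp1 : p < 1) (ρ : ℝ)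
    (f : (Fin N → Bool) → ℝ) :
    noiseStab N p ρ f = ∑ S, ρ ^ S.card * coeff N p f S ^ 2 := by
  calc noiseStab N p ρ f
      = ∑ x, ∑ x', wtPair N p ρ x x' *
          ((∑ S, coeff N p f S * phi N p S x) * ∑ T, coeff N p f T * phi N p T x') := by
        simp only [noiseStab, sum_coeff_mul_phi hp hp1]
    _ = ∑ S, ∑ T, coeff N p f S * coeff N p f T *
          ∑ x, ∑ x', wtPair N p ρ x x' * (phi N p S x * phi N p T x') := by
        simp_rw [sum_mul_sum, mul_sum]
        rw [sum_comm_cycle]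
        refine sum_congr rfl fun S _ => ?_
        rw [sum_comm_cycle]
        exact sum_congr rfl fun T _ => sum_congr rfl fun x _ => sum_congr rfl fun x' _ => by ring
    _ = ∑ S, ρ ^ S.card * coeff N p f S ^ 2 := by
        simp only [sum_wtPair_mul_phi_mul_phi hp hp1, mul_ite, mul_zero, sum_ite_eq, mem_univ,
          if_true]
        exact sum_congr rfl fun _ _ => by ring

lemma noiseStab_one (f : (Fin N → Bool) → ℝ) :
    noiseStab N p 1 f = expect N p (fun x => f x ^ 2) := by
  have hdiag : ∀ x x', wtPair N p 1 x x' = if x = x' then wt N p x else 0 := by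
    intro x x'
    simp only [wtPair, pairWt_one, prod_ite_zero, mem_univ, forall_const, ← funext_iff]
    rfl
  simp [noiseStab, expect, hdiag, sq]

theorem sum_coeff_sq (hp : 0 < p) (hp1 : p < 1) (f : (Fin N → Bool) → ℝ) :
    ∑ S, coeff N p f S ^ 2 = expect N p (fun x => f x ^ 2) := by
  simpa using
    (noiseStab_eq_sum_pow_card_mul_coeff_sq hp hp1 1 f).symm.trans (noiseStab_one f)

end Fourier

lemma sum_filter_two_le_mul_one_sub_sq_le {α : Type*} [Fintype α] (d : α → ℕ) (a : α → ℝ)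
    (ha : ∀ s, 0 ≤ a s) {ρ : ℝ} (hρ0 : 0 ≤ ρ) (hρ1 : ρ ≤ 1) :
    (∑ s ∈ univ.filter (fun s => 2 ≤ d s), a s) * (1 - ρ ^ 2) ≤ ∑ s, (1 - ρ ^ d s) * a s := by
  rw [sum_mul]
  calc ∑ s ∈ univ.filter (fun s => 2 ≤ d s), a s * (1 - ρ ^ 2)
      ≤ ∑ s ∈ univ.filter (fun s => 2 ≤ d s), (1 - ρ ^ d s) * a s := by
        refine sum_le_sum fun s hs => ?_
        have := pow_le_pow_of_le_one hρ0 hρ1 (mem_filter.1 hs).2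
        nlinarith [ha s]
    _ ≤ ∑ s, (1 - ρ ^ d s) * a s :=
        sum_le_sum_of_subset_of_nonneg (filter_subset _ _) fun s _ _ =>
          mul_nonneg (sub_nonneg.2 (pow_le_one₀ hρ0 hρ1)) (ha s)

/-- Theorem 3.2: the normalized residual of the best linear approximation is bounded
by (1 - h̄(ρ))/(1 - ρ²), where h̄(ρ) = h(ρ)/E[f²]. -/
theorem stmt_10 (N : ℕ) (p : ℝ) (hp : 0 < p) (hp1 : p < 1)
    (f : (Fin N → Bool) → ℝ) (hf : 0 < expect N p (fun x => (f x) ^ 2))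
    (ρ : ℝ) (hρ0 : 0 ≤ ρ) (hρ1 : ρ < 1) :
    (∑ S ∈ Finset.univ.filter (fun S : Finset (Fin N) => 2 ≤ S.card),
        (coeff N p f S) ^ 2) / (∑ S : Finset (Fin N), (coeff N p f S) ^ 2)
      ≤ (1 - noiseStab N p ρ f / expect N p (fun x => (f x) ^ 2)) / (1 - ρ ^ 2) := by
  have hgap : expect N p (fun x => f x ^ 2) - noiseStab N p ρ f
      = ∑ S, (1 - ρ ^ S.card) * coeff N p f S ^ 2 := by
    rw [noiseStab_eq_sum_pow_card_mul_coeff_sq hp hp1, ← sum_coeff_sq hp hp1, ← sum_sub_distrib]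
    exact sum_congr rfl fun _ _ => by ring
  rw [sum_coeff_sq hp hp1, div_le_div_iff₀ hf (by nlinarith), one_sub_div hf.ne',
    div_mul_cancel₀ _ hf.ne', hgap]
  exact sum_filter_two_le_mul_one_sub_sq_le _ _ (fun S => sq_nonneg _) hρ0 hρ1.le

end
end Paper
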